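/- arXiv:0807.2362 — 6 statements merged into one kernel-verified Lean document; each statement's English description precedes it below -/
import Mathlib

section
/- Let I be a countable index set, (V_i)_{i∈I} complex Hilbert spaces, and V = ⊕_{i∈I} V_i their Hilbert direct sum. Let a_{ij} : V_j × V_i → ℂ (i,j ∈ I) be sesquilinear mappings and M_{ij} ≥ 0 constants such that |a_{ij}(ψ,ψ')| ≤ M_{ij}·‖ψ‖_{V_j}·‖ψ'‖_{V_i} for all ψ ∈ V_j, ψ' ∈ V_i. If the matrix (M_{ij})_{i,j∈I} defines a bounded linear operator M on ℓ²(I), then for all ψ, ψ' ∈ V the double series a(ψ,ψ') := ∑_{i,j∈I} a_{ij}(ψ_j, ψ'_i) converges absolutely, and the resulting sesquilinear form a on V is continuous with constant ‖M‖, i.e. |a(ψ,ψ')| ≤ ‖M‖·‖ψ‖_V·‖ψ'‖_V for all ψ, ψ' ∈ V. -/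
/-!
Each term of the double series is dominated by `M i j * ‖ψ j‖ * ‖ψ' i‖`. With `x = (‖ψ j‖)_j`
and `y = (‖ψ' i‖)_i` in real `ℓ²`, this nonnegative double series may be summed row by row, and
its sum is `⟪T x, y⟫ ≤ ‖T‖ * ‖x‖ * ‖y‖ = ‖T‖ * ‖ψ‖ * ‖ψ'‖`.
-/

open scoped ENNReal InnerProductSpace

namespace lp

variable {α : Type*} {E : α → Type*} [∀ i, NormedAddCommGroup (E i)] {p : ℝ≥0∞}

noncomputable def pointwiseNorm (f : lp E p) : lp (fun _ : α => ℝ) p :=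
  ⟨fun i => ‖f i‖, memℓp_norm_iff.mpr (lp.memℓp f)⟩

@[simp]
theorem pointwiseNorm_apply (f : lp E p) (i : α) : pointwiseNorm f i = ‖f i‖ := rfl

@[simp]
theorem norm_pointwiseNorm (f : lp E p) : ‖pointwiseNorm f‖ = ‖f‖ := by
  obtain (rfl | rfl | hp) := p.trichotomy
  · simp [lp.norm_eq_card_dsupport]
  · simp [lp.norm_eq_ciSup]
  · simp [lp.norm_eq_tsum_rpow hp]

end lp

theorem hasSum_prod_of_nonneg {α β : Type*} {f : α × β → ℝ} {g : α → ℝ} {a : ℝ} (hf : 0 ≤ f)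
    (hrow : ∀ x, HasSum (fun y => f (x, y)) (g x)) (hg : HasSum g a) : HasSum f a := by
  have hsum : Summable f :=
    (summable_prod_of_nonneg hf).mpr
      ⟨fun x => (hrow x).summable, by simpa only [fun x => (hrow x).tsum_eq] using hg.summable⟩
  exact hg.unique (hsum.hasSum.prod_fiberwise hrow) ▸ hsum.hasSum

theorem hasSum_matrix_inner_of_nonneg {I : Type*} {M : I → I → ℝ}
    {T : lp (fun _ : I => ℝ) 2 →L[ℝ] lp (fun _ : I => ℝ) 2} (hM : ∀ i j, 0 ≤ M i j)
    (hT : ∀ (x : lp (fun _ : I => ℝ) 2) (i : I), HasSum (fun j => M i j * x j) (T x i))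
    {x y : lp (fun _ : I => ℝ) 2} (hx : ∀ j, 0 ≤ x j) (hy : ∀ i, 0 ≤ y i) :
    HasSum (fun p : I × I => M p.1 p.2 * x p.2 * y p.1) ⟪T x, y⟫_ℝ := by
  refine hasSum_prod_of_nonneg (fun p => mul_nonneg (mul_nonneg (hM _ _) (hx _)) (hy _))
    (fun i => (hT x i).mul_right (y i)) ?_
  simpa [mul_comm] using lp.hasSum_inner (𝕜 := ℝ) (T x) y

theorem stmt0_general {I : Type*}
    {V : I → Type*} [∀ i, NormedAddCommGroup (V i)] [∀ i, InnerProductSpace ℂ (V i)]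
    (a : ∀ i j, V j →ₗ[ℂ] V i →ₗ⋆[ℂ] ℂ)
    (M : I → I → ℝ) (hMnonneg : ∀ i j, 0 ≤ M i j)
    (hbound : ∀ i j (ψ : V j) (ψ' : V i), ‖a i j ψ ψ'‖ ≤ M i j * ‖ψ‖ * ‖ψ'‖)
    (T : lp (fun _ : I => ℝ) 2 →L[ℝ] lp (fun _ : I => ℝ) 2)
    (hT : ∀ (x : lp (fun _ : I => ℝ) 2) (i : I), HasSum (fun j => M i j * x j) (T x i)) :
    ∀ ψ ψ' : lp V 2,
      Summable (fun p : I × I => ‖a p.1 p.2 (ψ p.2) (ψ' p.1)‖) ∧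
      ‖∑' p : I × I, a p.1 p.2 (ψ p.2) (ψ' p.1)‖ ≤ ‖T‖ * ‖ψ‖ * ‖ψ'‖ := by
  intro ψ ψ'
  set x := lp.pointwiseNorm ψ
  set y := lp.pointwiseNorm ψ'
  have hdom : HasSum (fun p : I × I => M p.1 p.2 * x p.2 * y p.1) ⟪T x, y⟫_ℝ :=
    hasSum_matrix_inner_of_nonneg hMnonneg hT (fun _ => norm_nonneg _) (fun _ => norm_nonneg _)
  have hle (p : I × I) : ‖a p.1 p.2 (ψ p.2) (ψ' p.1)‖ ≤ M p.1 p.2 * x p.2 * y p.1 :=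
    hbound _ _ _ _
  refine ⟨hdom.summable.of_nonneg_of_le (fun _ => norm_nonneg _) hle, ?_⟩
  calc ‖∑' p : I × I, a p.1 p.2 (ψ p.2) (ψ' p.1)‖
      ≤ ⟪T x, y⟫_ℝ := tsum_of_norm_bounded hdom hle
    _ ≤ ‖T x‖ * ‖y‖ := real_inner_le_norm _ _
    _ ≤ ‖T‖ * ‖x‖ * ‖y‖ := mul_le_mul_of_nonneg_right (T.le_opNorm x) (norm_nonneg _)
    _ = ‖T‖ * ‖ψ‖ * ‖ψ'‖ := by simp only [x, y, lp.norm_pointwiseNorm]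

/-- Let `I` be a countable index set, `(V i)` complex Hilbert spaces and
`lp V 2` their Hilbert direct sum.  Let `a i j : V j × V i → ℂ` be sesquilinear mappings
(bundled as linear-in-the-first, conjugate-linear-in-the-second maps) with
`‖a i j ψ ψ'‖ ≤ M i j * ‖ψ‖ * ‖ψ'‖` for nonnegative constants `M i j`.  If the matrix
`(M i j)` defines a bounded linear operator `T` on `ℓ²(I)` (i.e. for every `x ∈ ℓ²(I)` the
`i`-th row sum `∑ j, M i j * x j` converges to `(T x) i`), then for all `ψ ψ'` in the direct
sum the double series `∑_{i,j} a i j (ψ j) (ψ' i)` converges absolutely and the resulting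
sesquilinear form is continuous with constant `‖T‖`. -/
theorem stmt0 {I : Type*} [Countable I]
    {V : I → Type*} [∀ i, NormedAddCommGroup (V i)] [∀ i, InnerProductSpace ℂ (V i)]
    [∀ i, CompleteSpace (V i)]
    (a : ∀ i j, V j →ₗ[ℂ] V i →ₗ⋆[ℂ] ℂ)
    (M : I → I → ℝ) (hMnonneg : ∀ i j, 0 ≤ M i j)
    (hbound : ∀ i j (ψ : V j) (ψ' : V i), ‖a i j ψ ψ'‖ ≤ M i j * ‖ψ‖ * ‖ψ'‖)
    (T : lp (fun _ : I => ℝ) 2 →L[ℝ] lp (fun _ : I => ℝ) 2)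
    (hT : ∀ (x : lp (fun _ : I => ℝ) 2) (i : I), HasSum (fun j => M i j * x j) (T x i)) :
    ∀ ψ ψ' : lp V 2,
      Summable (fun p : I × I => ‖a p.1 p.2 (ψ p.2) (ψ' p.1)‖) ∧
      ‖∑' p : I × I, a p.1 p.2 (ψ p.2) (ψ' p.1)‖ ≤ ‖T‖ * ‖ψ‖ * ‖ψ'‖ :=
  stmt0_general a M hMnonneg hbound T hT
end

section
/- Let V = ⊕_{i∈I} V_i be the Hilbert direct sum of complex Hilbert spaces over a countable index set I. Let a_{ij} : V_j × V_i → ℂ be sesquilinear mappings that are continuous with constants M_{ij} ≥ 0 (|a_{ij}(ψ,ψ')| ≤ M_{ij}‖ψ‖_{V_j}‖ψ'‖_{V_i}), such that the form a(ψ,ψ') := ∑_{i,j∈I} a_{ij}(ψ_j,ψ'_i) is a well-defined continuous sesquilinear form on V. Assume each diagonal form a_{ii} is coercive with constant α_{ii} > 0, i.e. Re a_{ii}(ψ,ψ) ≥ α_{ii}‖ψ‖²_{V_i}. Define the matrix A by A_{ii} = α_{ii} and A_{ij} = −M_{ij} for i ≠ j. If A defines a bounded operator on ℓ²(I) which is coercive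 with constant α > 0 (i.e. Re (Av|v) ≥ α‖v‖²_{ℓ²(I)} for all v ∈ ℓ²(I)), then the form a is coercive on V with the same constant α. -/
/-! Put `x i := ‖ψ i‖`, an element of real `ℓ²(I)` with `‖x‖ = ‖ψ‖`. Entrywise,
`A i j * x j * x i ≤ Re a i j (ψ j) (ψ i)`: on the diagonal this is the coercivity of `a i i`,
off it the continuity bound `|a i j (ψ j) (ψ i)| ≤ M i j * x j * x i`. Summing over `I × I`,
`c ‖ψ‖² ≤ ⟪T x, x⟫ = ∑ A i j x j x i ≤ Re ∑ a i j (ψ j) (ψ i)`. -/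

open scoped ENNReal

theorem summable_prod_of_le_of_summable_rows {β γ : Type*} {F G : β × γ → ℝ} (hFG : F ≤ G)
    (hG : Summable G) (hrow : ∀ b, Summable fun c => F (b, c))
    (hrows : Summable fun b => ∑' c, F (b, c)) : Summable F := by
  set P : β × γ → ℝ := fun p => max (F p) 0
  have hP : Summable P := hG.abs.of_nonneg_of_le (fun _ => le_max_right _ _)
    fun p => max_le ((hFG p).trans (le_abs_self _)) (abs_nonneg _)
  -- The negative part `P - F` is nonnegative, so summability can be checked row by row.
  have hN : Summable (P - F) := by
    refine (summable_prod_of_nonneg fun p => sub_nonneg.2 (le_max_left _ _)).2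
      ⟨fun b => (hP.prod_factor b).sub (hrow b), ?_⟩
    exact (hP.prod.sub hrows).congr fun b => ((hP.prod_factor b).tsum_sub (hrow b)).symm
  simpa using hP.sub hN

namespace lp

variable {ι : Type*} {E : ι → Type*} [∀ i, NormedAddCommGroup (E i)] {p : ℝ≥0∞}

def normSeq (f : lp E p) : lp (fun _ : ι => ℝ) p :=
  ⟨fun i => ‖f i‖, (lp.memℓp f).norm⟩

@[simp]
theorem normSeq_apply (f : lp E p) (i : ι) : normSeq f i = ‖f i‖ := rfl

theorem norm_normSeq (hp : p ≠ 0) (f : lp E p) : ‖normSeq f‖ = ‖f‖ :=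
  le_antisymm (norm_mono hp fun i => by simp) (norm_mono hp fun i => by simp)

theorem inner_le_tsum_of_hasSum_of_le {A : ι → ι → ℝ} {x y : lp (fun _ : ι => ℝ) 2}
    (hy : ∀ i, HasSum (fun j => A i j * x j) (y i)) {G : ι × ι → ℝ} (hG : Summable G)
    (hAG : ∀ i j, A i j * x j * x i ≤ G (i, j)) :
    inner ℝ y x ≤ ∑' p, G p := by
  have hrow : ∀ i, HasSum (fun j => A i j * x j * x i) (y i * x i) :=
    fun i => (hy i).mul_right (x i)
  have hyx : Summable fun i => y i * x i := by
    simpa [mul_comm] using lp.summable_inner (𝕜 := ℝ) y x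
  have hF : Summable fun p : ι × ι => A p.1 p.2 * x p.2 * x p.1 :=
    summable_prod_of_le_of_summable_rows (fun p => hAG p.1 p.2) hG
      (fun i => (hrow i).summable) (hyx.congr fun i => (hrow i).tsum_eq.symm)
  calc inner ℝ y x = ∑' i, y i * x i := by simp [lp.inner_eq_tsum, mul_comm]
    _ = ∑' p : ι × ι, A p.1 p.2 * x p.2 * x p.1 := by
      rw [hF.tsum_prod' fun i => (hrow i).summable]
      exact tsum_congr fun i => (hrow i).tsum_eq.symm
    _ ≤ ∑' p, G p := hF.tsum_le_tsum (fun p => hAG p.1 p.2) hG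

end lp

theorem stmt4_general {I : Type*}
    {V : I → Type*} [∀ i, NormedAddCommGroup (V i)] [∀ i, InnerProductSpace ℂ (V i)]
    (a : ∀ i j, V j →ₗ[ℂ] V i →ₗ⋆[ℂ] ℂ)
    (M : I → I → ℝ)
    (hbound : ∀ i j (x : V j) (y : V i), ‖a i j x y‖ ≤ M i j * ‖x‖ * ‖y‖)
    (hsum : ∀ ψ ψ' : lp V 2,
      Summable (fun p : I × I => a p.1 p.2 (ψ p.2) (ψ' p.1)))
    (α : I → ℝ)
    (hdiag : ∀ i (x : V i), α i * ‖x‖ ^ 2 ≤ (a i i x x).re)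
    (A : I → I → ℝ) (hAdiag : ∀ i, A i i = α i)
    (hAoff : ∀ i j, i ≠ j → A i j = -(M i j))
    (T : lp (fun _ : I => ℝ) 2 →L[ℝ] lp (fun _ : I => ℝ) 2)
    (hT : ∀ (x : lp (fun _ : I => ℝ) 2) (i : I), HasSum (fun j => A i j * x j) (T x i))
    (c : ℝ)
    (hTcoer : ∀ x : lp (fun _ : I => ℝ) 2, c * ‖x‖ ^ 2 ≤ (inner ℝ (T x) x : ℝ)) :
    ∀ ψ : lp V 2,
      c * ‖ψ‖ ^ 2 ≤ (∑' p : I × I, a p.1 p.2 (ψ p.2) (ψ p.1)).re := by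
  intro ψ
  set x := lp.normSeq ψ
  have hentry : ∀ i j, A i j * x j * x i ≤ (a i j (ψ j) (ψ i)).re := by
    intro i j
    rcases eq_or_ne i j with rfl | hij
    · simpa [x, hAdiag, mul_assoc, sq] using hdiag i (ψ i)
    · have hre := (abs_le.1 (Complex.abs_re_le_norm (a i j (ψ j) (ψ i)))).1
      rw [hAoff i j hij]
      simpa [x] using (neg_le_neg (hbound i j (ψ j) (ψ i))).trans hre
  calc c * ‖ψ‖ ^ 2 = c * ‖x‖ ^ 2 := by rw [lp.norm_normSeq (by norm_num)]
    _ ≤ inner ℝ (T x) x := hTcoer x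
    _ ≤ ∑' p : I × I, (a p.1 p.2 (ψ p.2) (ψ p.1)).re :=
      lp.inner_le_tsum_of_hasSum_of_le (hT x) (Complex.hasSum_re (hsum ψ ψ).hasSum).summable
        hentry
    _ = (∑' p : I × I, a p.1 p.2 (ψ p.2) (ψ p.1)).re := (Complex.re_tsum (hsum ψ ψ)).symm

/-- Let `lp V 2` be the Hilbert direct sum of complex Hilbert spaces over
a countable index set `I`.  Let `a i j : V j × V i → ℂ` be sesquilinear mappings, continuous
with constants `M i j ≥ 0`, such that the form `ψ,ψ' ↦ ∑_{i,j} a i j (ψ j) (ψ' i)` is a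
well-defined continuous sesquilinear form on `lp V 2`.  Assume each diagonal form `a i i` is
coercive with constant `α i > 0`.  If the matrix `A` with `A i i = α i` and
`A i j = -(M i j)` for `i ≠ j` defines a bounded operator `T` on real `ℓ²(I)` which is
coercive with constant `c > 0`, then the form is coercive with the same constant `c`. -/
theorem stmt4 {I : Type*} [Countable I]
    {V : I → Type*} [∀ i, NormedAddCommGroup (V i)] [∀ i, InnerProductSpace ℂ (V i)]
    [∀ i, CompleteSpace (V i)]
    (a : ∀ i j, V j →ₗ[ℂ] V i →ₗ⋆[ℂ] ℂ)
    (M : I → I → ℝ) (hMnonneg : ∀ i j, 0 ≤ M i j)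
    (hbound : ∀ i j (x : V j) (y : V i), ‖a i j x y‖ ≤ M i j * ‖x‖ * ‖y‖)
    (hsum : ∀ ψ ψ' : lp V 2,
      Summable (fun p : I × I => a p.1 p.2 (ψ p.2) (ψ' p.1)))
    (hcont : ∃ C : ℝ, ∀ ψ ψ' : lp V 2,
      ‖∑' p : I × I, a p.1 p.2 (ψ p.2) (ψ' p.1)‖ ≤ C * ‖ψ‖ * ‖ψ'‖)
    (α : I → ℝ) (hαpos : ∀ i, 0 < α i)
    (hdiag : ∀ i (x : V i), α i * ‖x‖ ^ 2 ≤ (a i i x x).re)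
    (A : I → I → ℝ) (hAdiag : ∀ i, A i i = α i)
    (hAoff : ∀ i j, i ≠ j → A i j = -(M i j))
    (T : lp (fun _ : I => ℝ) 2 →L[ℝ] lp (fun _ : I => ℝ) 2)
    (hT : ∀ (x : lp (fun _ : I => ℝ) 2) (i : I), HasSum (fun j => A i j * x j) (T x i))
    (c : ℝ) (hc : 0 < c)
    (hTcoer : ∀ x : lp (fun _ : I => ℝ) 2, c * ‖x‖ ^ 2 ≤ (inner ℝ (T x) x : ℝ)) :
    ∀ ψ : lp V 2,
      c * ‖ψ‖ ^ 2 ≤ (∑' p : I × I, a p.1 p.2 (ψ p.2) (ψ p.1)).re :=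
  stmt4_general a M hbound hsum α hdiag A hAdiag hAoff T hT c hTcoer
end

section
/- Let Ω ⊆ ℝ^d be a nonempty open connected set with Lebesgue measure, and let C : Ω → L(ℓ²(ℕ)) be a map into the bounded linear operators on ℓ²(ℕ) such that for every y ∈ ℓ²(ℕ) the function x ↦ C(x)y is (almost everywhere) strongly measurable, and such that C is essentially uniformly bounded (there is K with ‖C(x)‖ ≤ K for a.e. x). Let H := L²(Ω, ℓ²(ℕ)). Then for α > 0 the following are equivalent: (a) for almost all x ∈ Ω, Re (C(x)y | y)_{ℓ²} ≥ α‖y‖²_{ℓ²} for all y ∈ ℓ²(ℕ); (b) for all ψ ∈ H, Re ∫_Ω (C(x)ψ(x) | ψ(x))_{ℓ²} dx ≥ α‖ψ‖²_H. -/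
open MeasureTheory TopologicalSpace Filter
open scoped ENNReal InnerProductSpace

/-!
(a) ⇒ (b) is integration of the pointwise inequality at `y = ψ x`. For (b) ⇒ (a), testing (b)
with `ψ = 𝟙_s • y` for sets `s` of finite measure gives `∫_s (Re (C x y | y) - α ‖y‖²) ≥ 0`, hence
the pointwise inequality for a fixed `y` off a null set depending on `y`. Since `ℓ²(ℕ)` is
separable and the inequality is closed in `y`, one null set can be chosen for a countable dense
set of `y` and then for all of them.
-/

theorem HilbertBasis.separableSpace {ι 𝕜 E : Type*} [Countable ι] [RCLike 𝕜]
    [NormedAddCommGroup E] [InnerProductSpace 𝕜 E] (b : HilbertBasis ι 𝕜 E) :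
    SeparableSpace E := by
  rw [← isSeparable_univ_iff, ← Submodule.top_coe (R := 𝕜), ← b.dense_span,
    Submodule.topologicalClosure_coe]
  exact ((Set.countable_range b).isSeparable.span (R := 𝕜)).closure

theorem Filter.eventually_forall_of_forall_eventually_of_isClosed {X E : Type*} {l : Filter X}
    [CountableInterFilter l] [TopologicalSpace E] [SeparableSpace E] {p : X → E → Prop}
    (hp : ∀ x, IsClosed {y | p x y}) (h : ∀ y, ∀ᶠ x in l, p x y) : ∀ᶠ x in l, ∀ y, p x y := by
  obtain ⟨D, hD_count, hD_dense⟩ := exists_countable_dense E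
  filter_upwards [(eventually_countable_ball hD_count).2 fun y _ => h y] with x hx y
  exact (hp x).closure_subset_iff.2 hx (hD_dense y)

theorem MeasureTheory.AEStronglyMeasurable.apply_of_forall_apply {X 𝕜 E F : Type*}
    [MeasurableSpace X] {μ : Measure X} [NontriviallyNormedField 𝕜] [NormedAddCommGroup E]
    [NormedSpace 𝕜 E] [NormedAddCommGroup F] [NormedSpace 𝕜 F] {C : X → E →L[𝕜] F}
    (hC : ∀ y, AEStronglyMeasurable (fun x => C x y) μ) {f : X → E}
    (hf : AEStronglyMeasurable f μ) : AEStronglyMeasurable (fun x => C x (f x)) μ := by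
  obtain ⟨g, hg, hfg⟩ := hf
  have simple : ∀ s : SimpleFunc X E, AEStronglyMeasurable (fun x => C x (s x)) μ := by
    intro s
    induction s using SimpleFunc.induction with
    | @const y t ht =>
      convert (hC y).indicator ht using 1
      ext x
      by_cases hx : x ∈ t <;> simp [hx]
    | add _ hp hq => simpa only [SimpleFunc.coe_add, Pi.add_apply, map_add] using hp.fun_add hq
  have hCg : AEStronglyMeasurable (fun x => C x (g x)) μ :=
    aestronglyMeasurable_of_tendsto_ae atTop (fun n => simple (hg.approx n))
      (ae_of_all _ fun x => ((C x).continuous.tendsto _).comp (hg.tendsto_approx x))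
  exact hCg.congr (hfg.mono fun x hx => by simp only [hx])

theorem ContinuousLinearMap.norm_inner_apply_self_le {𝕜 E : Type*} [RCLike 𝕜]
    [SeminormedAddCommGroup E] [InnerProductSpace 𝕜 E] (T : E →L[𝕜] E) (y : E) :
    ‖⟪T y, y⟫_𝕜‖ ≤ ‖T‖ * ‖y‖ ^ 2 :=
  calc ‖⟪T y, y⟫_𝕜‖ ≤ ‖T y‖ * ‖y‖ := norm_inner_le_norm _ _
    _ ≤ ‖T‖ * ‖y‖ * ‖y‖ := by gcongr; exact T.le_opNorm y
    _ = ‖T‖ * ‖y‖ ^ 2 := by ring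

theorem MeasureTheory.Lp.norm_sq_eq_integral_norm_sq {X F : Type*} [MeasurableSpace X]
    {μ : Measure X} [NormedAddCommGroup F] (f : Lp F 2 μ) :
    ‖f‖ ^ 2 = ∫ x, ‖f x‖ ^ 2 ∂μ := by
  rw [Lp.norm_def, toReal_eLpNorm (Lp.aestronglyMeasurable f),
    lpNorm_eq_integral_norm_rpow_toReal two_ne_zero ENNReal.ofNat_ne_top
      (Lp.aestronglyMeasurable f)]
  simp only [ENNReal.toReal_ofNat, Real.rpow_two]
  exact Real.rpow_inv_natCast_pow (integral_nonneg fun x => sq_nonneg _) two_ne_zero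

theorem MeasureTheory.norm_indicatorConstLp_two_sq {X F : Type*} [MeasurableSpace X]
    {μ : Measure X} [NormedAddCommGroup F] {s : Set X} (hs : MeasurableSet s) (hμs : μ s ≠ ∞)
    (y : F) : ‖indicatorConstLp 2 hs hμs y‖ ^ 2 = μ.real s * ‖y‖ ^ 2 := by
  rw [norm_indicatorConstLp two_ne_zero ENNReal.ofNat_ne_top, mul_pow, ENNReal.toReal_ofNat,
    ← Real.sqrt_eq_rpow, Real.sq_sqrt measureReal_nonneg, mul_comm]

section Coercivity

variable {X 𝕜 E : Type*} [MeasurableSpace X] {μ : Measure X} [RCLike 𝕜] [NormedAddCommGroup E]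
  [InnerProductSpace 𝕜 E] {C : X → E →L[𝕜] E} {K α : ℝ}

theorem integrable_inner_apply_self (hC : ∀ y, AEStronglyMeasurable (fun x => C x y) μ)
    (hK : ∀ᵐ x ∂μ, ‖C x‖ ≤ K) (ψ : Lp E 2 μ) :
    Integrable (fun x => ⟪C x (ψ x), ψ x⟫_𝕜) μ := by
  have hψ := Lp.aestronglyMeasurable ψ
  refine (((Lp.memLp ψ).integrable_norm_pow two_ne_zero).const_mul K).mono'
    ((hψ.apply_of_forall_apply hC).inner hψ) ?_
  filter_upwards [hK] with x hx
  exact ((C x).norm_inner_apply_self_le _).trans (by gcongr)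

theorem integrableOn_inner_apply_const (hC : ∀ y, AEStronglyMeasurable (fun x => C x y) μ)
    (hK : ∀ᵐ x ∂μ, ‖C x‖ ≤ K) (y : E) {s : Set X} (hμs : μ s < ∞) :
    IntegrableOn (fun x => ⟪C x y, y⟫_𝕜) s μ := by
  refine .of_bound hμs ((hC y).inner aestronglyMeasurable_const).restrict (K * ‖y‖ ^ 2) ?_
  filter_upwards [ae_restrict_of_ae hK] with x hx
  exact ((C x).norm_inner_apply_self_le _).trans (by gcongr)

theorem integral_inner_apply_indicatorConstLp {s : Set X} (hs : MeasurableSet s)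
    (hμs : μ s ≠ ∞) (y : E) :
    ∫ x, ⟪C x (indicatorConstLp 2 hs hμs y x), indicatorConstLp 2 hs hμs y x⟫_𝕜 ∂μ =
      ∫ x in s, ⟪C x y, y⟫_𝕜 ∂μ := by
  rw [← integral_indicator hs]
  refine integral_congr_ae ?_
  filter_upwards [indicatorConstLp_coeFn (p := 2) (hs := hs) (hμs := hμs) (c := y)] with x hx
  by_cases hxs : x ∈ s <;> simp [hx, hxs]

theorem le_re_integral_inner_apply_self_of_ae
    (hC : ∀ y, AEStronglyMeasurable (fun x => C x y) μ) (hK : ∀ᵐ x ∂μ, ‖C x‖ ≤ K)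
    (hcoer : ∀ᵐ x ∂μ, ∀ y, α * ‖y‖ ^ 2 ≤ RCLike.re ⟪C x y, y⟫_𝕜) (ψ : Lp E 2 μ) :
    α * ‖ψ‖ ^ 2 ≤ RCLike.re (∫ x, ⟪C x (ψ x), ψ x⟫_𝕜 ∂μ) := by
  have hint := integrable_inner_apply_self hC hK ψ
  rw [Lp.norm_sq_eq_integral_norm_sq, ← integral_const_mul, ← integral_re hint]
  refine integral_mono_ae (((Lp.memLp ψ).integrable_norm_pow two_ne_zero).const_mul α) hint.re ?_
  filter_upwards [hcoer] with x hx
  exact hx (ψ x)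

theorem ae_le_re_inner_apply_of_forall_Lp [SigmaFinite μ]
    (hC : ∀ y, AEStronglyMeasurable (fun x => C x y) μ) (hK : ∀ᵐ x ∂μ, ‖C x‖ ≤ K)
    (hcoer : ∀ ψ : Lp E 2 μ, α * ‖ψ‖ ^ 2 ≤ RCLike.re (∫ x, ⟪C x (ψ x), ψ x⟫_𝕜 ∂μ)) (y : E) :
    ∀ᵐ x ∂μ, α * ‖y‖ ^ 2 ≤ RCLike.re ⟪C x y, y⟫_𝕜 := by
  have hint s (hμs : μ s < ∞) := integrableOn_inner_apply_const hC hK y hμs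
  have hnonneg : 0 ≤ᵐ[μ] fun x => RCLike.re ⟪C x y, y⟫_𝕜 - α * ‖y‖ ^ 2 := by
    refine ae_nonneg_of_forall_setIntegral_nonneg_of_sigmaFinite
      (fun s _ hμs => (hint s hμs).re.sub (integrableOn_const hμs.ne)) fun s hs hμs => ?_
    have htest := hcoer (indicatorConstLp 2 hs hμs.ne y)
    rw [norm_indicatorConstLp_two_sq, integral_inner_apply_indicatorConstLp,
      ← integral_re (hint s hμs)] at htest
    rw [integral_sub (hint s hμs).re (integrableOn_const hμs.ne), setIntegral_const,
      smul_eq_mul]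
    linarith
  filter_upwards [hnonneg] with x hx
  exact sub_nonneg.1 hx

theorem ae_le_re_inner_apply_iff_forall_Lp [SigmaFinite μ] [SeparableSpace E]
    (hC : ∀ y, AEStronglyMeasurable (fun x => C x y) μ) (hK : ∀ᵐ x ∂μ, ‖C x‖ ≤ K) :
    (∀ᵐ x ∂μ, ∀ y, α * ‖y‖ ^ 2 ≤ RCLike.re ⟪C x y, y⟫_𝕜) ↔
      ∀ ψ : Lp E 2 μ, α * ‖ψ‖ ^ 2 ≤ RCLike.re (∫ x, ⟪C x (ψ x), ψ x⟫_𝕜 ∂μ) := by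
  refine ⟨le_re_integral_inner_apply_self_of_ae hC hK, fun hcoer => ?_⟩
  refine eventually_forall_of_forall_eventually_of_isClosed (fun x => ?_)
    (ae_le_re_inner_apply_of_forall_Lp hC hK hcoer)
  exact isClosed_le (by fun_prop) (C x).reApplyInnerSelf_continuous

end Coercivity

theorem stmt7_general (d : ℕ) (Ω : Set (EuclideanSpace ℝ (Fin d)))
    (C : EuclideanSpace ℝ (Fin d) →
      (lp (fun _ : ℕ => ℂ) 2 →L[ℂ] lp (fun _ : ℕ => ℂ) 2))
    (hCmeas : ∀ y : lp (fun _ : ℕ => ℂ) 2,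
      AEStronglyMeasurable (fun x => C x y) (volume.restrict Ω))
    (hCbdd : ∃ K : ℝ, ∀ᵐ x ∂(volume.restrict Ω), ‖C x‖ ≤ K)
    (α : ℝ) :
    (∀ᵐ x ∂(volume.restrict Ω), ∀ y : lp (fun _ : ℕ => ℂ) 2,
        α * ‖y‖ ^ 2 ≤ (inner ℂ (C x y) y : ℂ).re) ↔
    (∀ ψ : Lp (lp (fun _ : ℕ => ℂ) 2) 2 (volume.restrict Ω),
        α * ‖ψ‖ ^ 2 ≤
          (∫ x, (inner ℂ (C x (ψ x)) (ψ x) : ℂ) ∂(volume.restrict Ω)).re) := by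
  obtain ⟨K, hK⟩ := hCbdd
  have : SeparableSpace (lp (fun _ : ℕ => ℂ) 2) :=
    (default : HilbertBasis ℕ ℂ (lp (fun _ : ℕ => ℂ) 2)).separableSpace
  exact ae_le_re_inner_apply_iff_forall_Lp hCmeas hK

/-- Let `Ω ⊆ ℝ^d` be a nonempty open connected set with Lebesgue measure
`μ = volume.restrict Ω` and `C : ℝ^d → L(ℓ²(ℕ))` strongly measurable and essentially
uniformly bounded.  With `H = L²(Ω, ℓ²(ℕ))`, for `α > 0` the following are equivalent:
(a) for a.e. `x ∈ Ω` one has `Re (C x y | y) ≥ α ‖y‖²` for all `y ∈ ℓ²(ℕ)`;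
(b) for all `ψ ∈ H` one has `Re ∫ (C x (ψ x) | ψ x) dx ≥ α ‖ψ‖²`. -/
theorem stmt7 (d : ℕ) (Ω : Set (EuclideanSpace ℝ (Fin d)))
    (hΩopen : IsOpen Ω) (hΩconn : IsConnected Ω)
    (C : EuclideanSpace ℝ (Fin d) →
      (lp (fun _ : ℕ => ℂ) 2 →L[ℂ] lp (fun _ : ℕ => ℂ) 2))
    (hCmeas : ∀ y : lp (fun _ : ℕ => ℂ) 2,
      AEStronglyMeasurable (fun x => C x y) (volume.restrict Ω))
    (hCbdd : ∃ K : ℝ, ∀ᵐ x ∂(volume.restrict Ω), ‖C x‖ ≤ K)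
    (α : ℝ) (hα : 0 < α) :
    (∀ᵐ x ∂(volume.restrict Ω), ∀ y : lp (fun _ : ℕ => ℂ) 2,
        α * ‖y‖ ^ 2 ≤ (inner ℂ (C x y) y : ℂ).re) ↔
    (∀ ψ : Lp (lp (fun _ : ℕ => ℂ) 2) 2 (volume.restrict Ω),
        α * ‖ψ‖ ^ 2 ≤
          (∫ x, (inner ℂ (C x (ψ x)) (ψ x) : ℂ) ∂(volume.restrict Ω)).re) :=
  stmt7_general d Ω C hCmeas hCbdd α
end

section
/- Let I be a countable index set, (V_i)_{i∈I} and (H_i)_{i∈I} complex Hilbert spaces with V_i continuously embedded in H_i, uniformly in i, and set V = ⊕_{i∈I} V_i, H = ⊕_{i∈I} H_i (so V is continuously embedded in H). Let a_{ij} : V_j × V_i → ℂ be sesquilinear mappings such that the form a(ψ,ψ') := ∑_{i,j∈I} a_{ij}(ψ_j,ψ'_i) is a well-defined continuous sesquilinear form on V. Assume: (i) for all i ≠ j there are α_{ij} < 0 and ω_{ij} ∈ ℝ with |a_{ij}(ψ,ψ')| ≤ −α_{ij}‖ψ‖_{V_j}‖ψ'‖_{V_i} + ω_{ij}‖ψ‖_{H_j}‖ψ'‖_{H_i};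 (ii) for all i there are α_{ii} > 0 and ω_{ii} ∈ ℝ with Re a_{ii}(ψ,ψ) + ω_{ii}‖ψ‖²_{H_i} ≥ α_{ii}‖ψ‖²_{V_i}; (iii) the matrix A = (α_{ij}) defines a bounded operator on ℓ²(I) with Re (Av|v) ≥ α‖v‖²_{ℓ²(I)} for some α > 0 and all v; (iv) the matrix Ω = (ω_{ij}) defines a bounded operator on ℓ²(I). Then the form a is H-elliptic and satisfies Re a(ψ,ψ) + ‖Ω‖_{L(ℓ²(I))}·‖ψ‖²_H ≥ α‖ψ‖²_V for all ψ ∈ V. -/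
open scoped InnerProductSpace

/-!
Put `v i = ‖ψ i‖_{V i}` and `w i = ‖ψ i‖_{H i}`; both lie in `ℓ²(I)`, with `‖v‖ = ‖ψ‖_V`
and `‖w‖ = ‖ψ‖_H`. The hypotheses on the blocks give, entry by entry,
`Re a i j (ψ j) (ψ i) ≥ α i j v j v i - ω i j w j w i`: on the diagonal this is (ii), off it
this is (i) together with `Re z ≥ -‖z‖`. Summing first along each row and then over the rows
gives `Re a(ψ, ψ) ≥ ⟪T v, v⟫ - ⟪W w, w⟫ ≥ c ‖v‖² - ‖W‖ ‖w‖²`.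
-/

namespace lp

variable {ι : Type*}

theorem norm_sq_eq_tsum {E : ι → Type*} [∀ i, NormedAddCommGroup (E i)] (f : lp E 2) :
    ‖f‖ ^ 2 = ∑' i, ‖f i‖ ^ 2 := by
  simpa using norm_rpow_eq_tsum (p := 2) (by norm_num) f

theorem hasSum_mul_real (x y : lp (fun _ : ι => ℝ) 2) :
    HasSum (fun i => x i * y i) ⟪x, y⟫_ℝ := by
  simpa [mul_comm] using hasSum_inner (𝕜 := ℝ) x y

end lp

theorem ContinuousLinearMap.real_inner_map_self_le {F : Type*} [NormedAddCommGroup F]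
    [InnerProductSpace ℝ F] (W : F →L[ℝ] F) (x : F) : ⟪W x, x⟫_ℝ ≤ ‖W‖ * ‖x‖ ^ 2 :=
  calc ⟪W x, x⟫_ℝ ≤ ‖W x‖ * ‖x‖ := real_inner_le_norm _ _
    _ ≤ ‖W‖ * ‖x‖ * ‖x‖ := by gcongr; exact W.le_opNorm x
    _ = ‖W‖ * ‖x‖ ^ 2 := by ring

/-- Rows are summed first, so only the summability of `b` itself is needed, not that of the
comparison terms `α i j * v j * v i` and `ω i j * w j * w i` over `I × I`. -/
theorem inner_sub_inner_le_re_tsum {I : Type*} {b : I → I → ℂ}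
    (hb : Summable fun p : I × I => b p.1 p.2) {α ω : I → I → ℝ}
    {v w Av Ωw : lp (fun _ : I => ℝ) 2}
    (hAv : ∀ i, HasSum (fun j => α i j * v j) (Av i))
    (hΩw : ∀ i, HasSum (fun j => ω i j * w j) (Ωw i))
    (hle : ∀ i j, α i j * v j * v i - ω i j * w j * w i ≤ (b i j).re) :
    ⟪Av, v⟫_ℝ - ⟪Ωw, w⟫_ℝ ≤ (∑' p : I × I, b p.1 p.2).re := by
  have hrow i : HasSum (fun j => (b i j).re) (∑' j, b i j).re :=
    Complex.hasSum_re (hb.prod_factor i).hasSum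
  have hrow_le i : Av i * v i - Ωw i * w i ≤ (∑' j, b i j).re :=
    hasSum_le (hle i) (((hAv i).mul_right (v i)).sub ((hΩw i).mul_right (w i))) (hrow i)
  exact hasSum_le hrow_le ((lp.hasSum_mul_real Av v).sub (lp.hasSum_mul_real Ωw w))
    ((Complex.hasSum_re hb.hasSum).prod_fiberwise hrow)

theorem re_block_ge {I : Type*} {V H : I → Type*}
    [∀ i, NormedAddCommGroup (V i)] [∀ i, NormedSpace ℂ (V i)]
    [∀ i, NormedAddCommGroup (H i)] [∀ i, NormedSpace ℂ (H i)]
    (J : ∀ i, V i →L[ℂ] H i) (a : ∀ i j, V j →ₗ[ℂ] V i →ₗ⋆[ℂ] ℂ) (α ω : I → I → ℝ)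
    (hoff : ∀ i j, i ≠ j → ∀ (x : V j) (y : V i),
      ‖a i j x y‖ ≤ -(α i j) * ‖x‖ * ‖y‖ + ω i j * ‖J j x‖ * ‖J i y‖)
    (hdiag : ∀ i (x : V i), α i i * ‖x‖ ^ 2 ≤ (a i i x x).re + ω i i * ‖J i x‖ ^ 2)
    (ψ : ∀ i, V i) (i j : I) :
    α i j * ‖ψ j‖ * ‖ψ i‖ - ω i j * ‖J j (ψ j)‖ * ‖J i (ψ i)‖ ≤ (a i j (ψ j) (ψ i)).re := by
  rcases eq_or_ne i j with rfl | hij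
  · linarith [hdiag i (ψ i)]
  · linarith [hoff i j hij (ψ j) (ψ i),
      neg_le_of_abs_le (Complex.abs_re_le_norm (a i j (ψ j) (ψ i)))]

theorem stmt11_general {I : Type*}
    {V : I → Type*} [∀ i, NormedAddCommGroup (V i)] [∀ i, InnerProductSpace ℂ (V i)]
    {H : I → Type*} [∀ i, NormedAddCommGroup (H i)] [∀ i, InnerProductSpace ℂ (H i)]
    (J : ∀ i, V i →L[ℂ] H i)
    (cJ : ℝ) (hJunif : ∀ i (x : V i), ‖J i x‖ ≤ cJ * ‖x‖)
    (a : ∀ i j, V j →ₗ[ℂ] V i →ₗ⋆[ℂ] ℂ)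
    (hsum : ∀ ψ ψ' : lp V 2,
      Summable (fun p : I × I => a p.1 p.2 (ψ p.2) (ψ' p.1)))
    (α ω : I → I → ℝ)
    (hoff : ∀ i j, i ≠ j → ∀ (x : V j) (y : V i),
      ‖a i j x y‖ ≤ -(α i j) * ‖x‖ * ‖y‖ + ω i j * ‖J j x‖ * ‖J i y‖)
    (hdiag : ∀ i (x : V i),
      α i i * ‖x‖ ^ 2 ≤ (a i i x x).re + ω i i * ‖J i x‖ ^ 2)
    (T : lp (fun _ : I => ℝ) 2 →L[ℝ] lp (fun _ : I => ℝ) 2)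
    (hT : ∀ (x : lp (fun _ : I => ℝ) 2) (i : I), HasSum (fun j => α i j * x j) (T x i))
    (c : ℝ)
    (hTcoer : ∀ x : lp (fun _ : I => ℝ) 2, c * ‖x‖ ^ 2 ≤ (inner ℝ (T x) x : ℝ))
    (W : lp (fun _ : I => ℝ) 2 →L[ℝ] lp (fun _ : I => ℝ) 2)
    (hW : ∀ (x : lp (fun _ : I => ℝ) 2) (i : I), HasSum (fun j => ω i j * x j) (W x i)) :
    ∀ ψ : lp V 2,
      c * ‖ψ‖ ^ 2 ≤
        (∑' p : I × I, a p.1 p.2 (ψ p.2) (ψ p.1)).re +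
          ‖W‖ * ∑' i : I, ‖J i (ψ i)‖ ^ 2 := by
  intro ψ
  let ψH : lp H 2 :=
    ⟨fun i => J i (ψ i), ((lp.memℓp ψ).norm.const_mul cJ).mono fun i => hJunif i (ψ i)⟩
  have key := inner_sub_inner_le_re_tsum (hsum ψ ψ) (hT (lp.toNorm ψ)) (hW (lp.toNorm ψH))
    (re_block_ge J a α ω hoff hdiag ψ)
  have coercive := hTcoer (lp.toNorm ψ)
  have bounded := W.real_inner_map_self_le (lp.toNorm ψH)
  rw [lp.norm_toNorm] at coercive bounded
  rw [lp.norm_sq_eq_tsum] at bounded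
  linarith

/-- Let `(V i)`, `(H i)` be complex Hilbert spaces with `V i` embedded
in `H i` via injective bounded maps `J i`, uniformly in `i`, and form the direct sums
`lp V 2` and `lp H 2` (so that the `H`-norm of `ψ ∈ lp V 2` is `(∑ i, ‖J i (ψ i)‖²)^½`).
Let `a i j : V j × V i → ℂ` be sesquilinear mappings whose sum defines a continuous
sesquilinear form on `lp V 2`.  Assume (i) for `i ≠ j` there are `α i j < 0`, `ω i j ∈ ℝ`
with `‖a i j x y‖ ≤ -(α i j) ‖x‖_{V j} ‖y‖_{V i} + ω i j ‖x‖_{H j} ‖y‖_{H i}`;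
(ii) for each `i` there are `α i i > 0`, `ω i i ∈ ℝ` with
`Re (a i i x x) + ω i i ‖x‖²_{H i} ≥ α i i ‖x‖²_{V i}`;
(iii) the matrix `(α i j)` defines a bounded operator `T` on real `ℓ²(I)` with
`Re (T v | v) ≥ c ‖v‖²`, `c > 0`; (iv) the matrix `(ω i j)` defines a bounded operator `W`
on real `ℓ²(I)`.  Then the form is `H`-elliptic:
`Re a(ψ,ψ) + ‖W‖ ‖ψ‖²_H ≥ c ‖ψ‖²_V` for all `ψ`. -/
theorem stmt11 {I : Type*} [Countable I]
    {V : I → Type*} [∀ i, NormedAddCommGroup (V i)] [∀ i, InnerProductSpace ℂ (V i)]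
    [∀ i, CompleteSpace (V i)]
    {H : I → Type*} [∀ i, NormedAddCommGroup (H i)] [∀ i, InnerProductSpace ℂ (H i)]
    [∀ i, CompleteSpace (H i)]
    (J : ∀ i, V i →L[ℂ] H i) (hJinj : ∀ i, Function.Injective (J i))
    (cJ : ℝ) (hJunif : ∀ i (x : V i), ‖J i x‖ ≤ cJ * ‖x‖)
    (a : ∀ i j, V j →ₗ[ℂ] V i →ₗ⋆[ℂ] ℂ)
    (hsum : ∀ ψ ψ' : lp V 2,
      Summable (fun p : I × I => a p.1 p.2 (ψ p.2) (ψ' p.1)))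
    (hcont : ∃ C : ℝ, ∀ ψ ψ' : lp V 2,
      ‖∑' p : I × I, a p.1 p.2 (ψ p.2) (ψ' p.1)‖ ≤ C * ‖ψ‖ * ‖ψ'‖)
    (α ω : I → I → ℝ)
    (hαoff : ∀ i j, i ≠ j → α i j < 0)
    (hoff : ∀ i j, i ≠ j → ∀ (x : V j) (y : V i),
      ‖a i j x y‖ ≤ -(α i j) * ‖x‖ * ‖y‖ + ω i j * ‖J j x‖ * ‖J i y‖)
    (hαdiag : ∀ i, 0 < α i i)
    (hdiag : ∀ i (x : V i),
      α i i * ‖x‖ ^ 2 ≤ (a i i x x).re + ω i i * ‖J i x‖ ^ 2)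
    (T : lp (fun _ : I => ℝ) 2 →L[ℝ] lp (fun _ : I => ℝ) 2)
    (hT : ∀ (x : lp (fun _ : I => ℝ) 2) (i : I), HasSum (fun j => α i j * x j) (T x i))
    (c : ℝ) (hc : 0 < c)
    (hTcoer : ∀ x : lp (fun _ : I => ℝ) 2, c * ‖x‖ ^ 2 ≤ (inner ℝ (T x) x : ℝ))
    (W : lp (fun _ : I => ℝ) 2 →L[ℝ] lp (fun _ : I => ℝ) 2)
    (hW : ∀ (x : lp (fun _ : I => ℝ) 2) (i : I), HasSum (fun j => ω i j * x j) (W x i)) :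
    ∀ ψ : lp V 2,
      c * ‖ψ‖ ^ 2 ≤
        (∑' p : I × I, a p.1 p.2 (ψ p.2) (ψ p.1)).re +
          ‖W‖ * ∑' i : I, ‖J i (ψ i)‖ ^ 2 :=
  stmt11_general J cJ hJunif a hsum α ω hoff hdiag T hT c hTcoer W hW
end

section
/- Let a countable directed multigraph G be given by countable sets E (edges) and V (vertices) with maps s, t : E → V. Define the incoming incidence operator I⁺ sending x : E → ℂ to the family ((∑_{e ∈ t⁻¹(v)} x_e))_{v∈V}, and the outgoing incidence operator I⁻ analogously with s in place of t. Then I⁺ and I⁻ are (well-defined) bounded operators from ℓ²(E) to ℓ²(V) — i.e. there is a constant c such that for every x ∈ ℓ²(E) and every v the family (x_e)_{e∈t⁻¹(v)} (resp. (x_e)_{e∈s⁻¹(v)}) is summable, the resulting vector lies in ℓ²(V), and its norm is at most c‖x‖_{ℓ²(E)} — if and only if G is uniformly locally finite, i.e. there is k ∈ ℕ with deg(v) := #t⁻¹(v) + #s⁻¹(v) ≤ k for all v ∈ V. -/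
/-! Testing boundedness against the indicator vector of a finite set `F` of edges in one fibre:
its norm is `√#F` while its fibre sum is `#F`, so a bound `c` forces `#F ≤ c²`; hence every fibre
is finite with at most `⌊c²⌋` elements. Conversely, Cauchy–Schwarz on a fibre of size at most `k`
gives `‖∑_{f e = v} x e‖² ≤ k ∑_{f e = v} ‖x e‖²`, and summing over `v` bounds the operator
by `√k`. -/

open Finset

section

variable {ι E V G 𝕜 : Type*}

lemma lp.hasSum_norm_sq [NormedAddCommGroup G] (x : lp (fun _ : ι => G) 2) :
    HasSum (fun i => ‖x i‖ ^ 2) (‖x‖ ^ 2) := by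
  have h := lp.hasSum_norm (p := 2) (by norm_num) x
  simp only [ENNReal.toReal_ofNat, Real.rpow_two] at h
  exact h

lemma memℓp_two_of_summable_sq [NormedAddCommGroup G] {x : ι → G}
    (hx : Summable fun i => ‖x i‖ ^ 2) : Memℓp x 2 :=
  memℓp_gen (by simpa only [ENNReal.toReal_ofNat, Real.rpow_two] using hx)

lemma Set.Finite.norm_tsum_sq_le_ncard_mul [NormedAddCommGroup G] {S : Set E} (hS : S.Finite)
    (x : E → G) : ‖∑' e : S, x e‖ ^ 2 ≤ S.ncard * ∑' e : S, ‖x e‖ ^ 2 := by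
  lift S to Finset E using hS
  rw [Set.ncard_coe_finset, Finset.tsum_subtype', Finset.tsum_subtype' S fun e => ‖x e‖ ^ 2]
  calc ‖∑ e ∈ S, x e‖ ^ 2 ≤ (∑ e ∈ S, ‖x e‖) ^ 2 := by gcongr; exact norm_sum_le _ _
    _ ≤ #S * ∑ e ∈ S, ‖x e‖ ^ 2 := sq_sum_le_card_mul_sum_sq

variable (G) in
/-- For `f = t` (resp. `s`) this says that the incidence operator `I⁺` (resp. `I⁻`) is well
defined `ℓ²(E) → ℓ²(V)` with norm at most `c`. -/
def HasBoundedFiberSums [NormedAddCommGroup G] (f : E → V) (c : ℝ) : Prop :=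
  ∀ x : lp (fun _ : E => G) 2, ∃ y : lp (fun _ : V => G) 2,
    (∀ v, HasSum (fun e : f ⁻¹' {v} => x e) (y v)) ∧ ‖y‖ ≤ c * ‖x‖

lemma hasBoundedFiberSums_sqrt_of_ncard_le [NormedAddCommGroup G] {f : E → V} {k : ℕ}
    (hfin : ∀ v, (f ⁻¹' {v}).Finite) (hk : ∀ v, (f ⁻¹' {v}).ncard ≤ k) :
    HasBoundedFiberSums G f √k := by
  intro x
  have hx := (lp.hasSum_norm_sq x).tsum_fiberwise f
  have hy : ∀ v, ‖∑' e : f ⁻¹' {v}, x e‖ ^ 2 ≤ k * ∑' e : f ⁻¹' {v}, ‖x e‖ ^ 2 := fun v =>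
    ((hfin v).norm_tsum_sq_le_ncard_mul x).trans (by gcongr; exact_mod_cast hk v)
  let y : lp (fun _ : V => G) 2 := ⟨fun v => ∑' e : f ⁻¹' {v}, x e,
    memℓp_two_of_summable_sq <|
      (hx.summable.mul_left (k : ℝ)).of_nonneg_of_le (fun _ => by positivity) hy⟩
  refine ⟨y, fun v => by have := (hfin v).to_subtype; exact Summable.of_finite.hasSum, ?_⟩
  have : ‖y‖ ^ 2 ≤ (√k * ‖x‖) ^ 2 := by
    rw [mul_pow, Real.sq_sqrt k.cast_nonneg]
    exact hasSum_le hy (lp.hasSum_norm_sq y) (hx.mul_left (k : ℝ))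
  exact (pow_le_pow_iff_left₀ (norm_nonneg _) (by positivity) two_ne_zero).1 this

namespace HasBoundedFiberSums

variable [RCLike 𝕜] {f : E → V} {c : ℝ}

lemma card_le_sq (h : HasBoundedFiberSums 𝕜 f c) {v : V} {F : Finset E}
    (hF : ↑F ⊆ f ⁻¹' {v}) : (#F : ℝ) ≤ c ^ 2 := by
  classical
  let x : lp (fun _ : E => 𝕜) 2 := ∑ e ∈ F, lp.single 2 e 1
  have hx_apply : ∀ e, x e = if e ∈ F then 1 else 0 := fun e => by
    dsimp only [x]
    rw [lp.coeFn_sum, Finset.sum_apply]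
    simp [Pi.single_apply]
  have hx_norm : ‖x‖ ^ 2 = #F := by
    have h := lp.norm_sum_single (p := 2) (by norm_num) (fun _ : E => (1 : 𝕜)) F
    simpa only [ENNReal.toReal_ofNat, Real.rpow_two, norm_one, one_pow, sum_const,
      nsmul_eq_mul, mul_one] using h
  have hx_fiber : HasSum (fun e : f ⁻¹' {v} => x e) (#F : 𝕜) := by
    have hsupp : Function.support (fun e => x e) ⊆ f ⁻¹' {v} := fun e he =>
      hF (Finset.mem_coe.2 (by_contra fun heF => he (by simp [hx_apply, heF])))
    refine (hasSum_subtype_iff_of_support_subset hsupp).2 ?_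
    have hsum : HasSum (fun e => x e) (∑ e ∈ F, x e) :=
      hasSum_sum_of_ne_finset_zero fun e heF => by simp [hx_apply, heF]
    simpa [hx_apply] using hsum
  obtain ⟨y, hy, hyx⟩ := h x
  have hFsq : (#F : ℝ) * #F ≤ c ^ 2 * #F := calc
    (#F : ℝ) * #F = ‖y v‖ ^ 2 := by rw [(hy v).unique hx_fiber, RCLike.norm_natCast]; ring
    _ ≤ ‖y‖ ^ 2 := by gcongr; exact lp.norm_apply_le_norm (by norm_num) y v
    _ ≤ (c * ‖x‖) ^ 2 := by gcongr
    _ = c ^ 2 * #F := by rw [mul_pow, hx_norm]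
  rcases (#F).eq_zero_or_pos with hF0 | hFpos
  · rw [hF0, Nat.cast_zero]; positivity
  · exact le_of_mul_le_mul_right hFsq (by exact_mod_cast hFpos)

lemma finite_fiber (h : HasBoundedFiberSums 𝕜 f c) (v : V) : (f ⁻¹' {v}).Finite := by
  by_contra hinf
  obtain ⟨F, hF, hcard⟩ := Set.Infinite.exists_subset_card_eq hinf (⌊c ^ 2⌋₊ + 1)
  have := h.card_le_sq hF
  rw [hcard] at this
  exact (Nat.lt_floor_add_one (c ^ 2)).not_ge (by exact_mod_cast this)

lemma ncard_fiber_le (h : HasBoundedFiberSums 𝕜 f c) (v : V) : (f ⁻¹' {v}).ncard ≤ ⌊c ^ 2⌋₊ := by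
  have hfin := h.finite_fiber v
  rw [Set.ncard_eq_toFinset_card _ hfin]
  exact Nat.le_floor (h.card_le_sq (v := v) (by simp))

end HasBoundedFiberSums

end

theorem stmt15_general {E V : Type*} (s t : E → V) :
    (∃ c : ℝ, ∀ x : lp (fun _ : E => ℂ) 2,
      (∃ y : lp (fun _ : V => ℂ) 2,
        (∀ v : V, HasSum (fun e : (t ⁻¹' {v} : Set E) => x e) (y v)) ∧
        ‖y‖ ≤ c * ‖x‖) ∧
      (∃ y : lp (fun _ : V => ℂ) 2,
        (∀ v : V, HasSum (fun e : (s ⁻¹' {v} : Set E) => x e) (y v)) ∧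
        ‖y‖ ≤ c * ‖x‖)) ↔
    (∃ k : ℕ, ∀ v : V, (t ⁻¹' {v}).Finite ∧ (s ⁻¹' {v}).Finite ∧
      (t ⁻¹' {v}).ncard + (s ⁻¹' {v}).ncard ≤ k) := by
  constructor
  · rintro ⟨c, hc⟩
    have ht : HasBoundedFiberSums ℂ t c := fun x => (hc x).1
    have hs : HasBoundedFiberSums ℂ s c := fun x => (hc x).2
    refine ⟨2 * ⌊c ^ 2⌋₊, fun v => ⟨ht.finite_fiber v, hs.finite_fiber v, ?_⟩⟩
    have := ht.ncard_fiber_le v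
    have := hs.ncard_fiber_le v
    omega
  · rintro ⟨k, hk⟩
    have ht : HasBoundedFiberSums ℂ t √k :=
      hasBoundedFiberSums_sqrt_of_ncard_le (fun v => (hk v).1) fun v => by have := hk v; omega
    have hs : HasBoundedFiberSums ℂ s √k :=
      hasBoundedFiberSums_sqrt_of_ncard_le (fun v => (hk v).2.1) fun v => by have := hk v; omega
    exact ⟨√k, fun x => ⟨ht x, hs x⟩⟩

/-- For a countable directed multigraph `(E, V, s, t)`, the incoming and
outgoing incidence operators `I⁺ : x ↦ (∑_{e ∈ t⁻¹(v)} x e)_v` and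
`I⁻ : x ↦ (∑_{e ∈ s⁻¹(v)} x e)_v` are well-defined bounded operators from `ℓ²(E)` to
`ℓ²(V)` — i.e. there is a constant `c` such that for every `x ∈ ℓ²(E)` the fibre families
are summable, the resulting vectors lie in `ℓ²(V)` and have norm at most `c ‖x‖` — if and
only if the graph is uniformly locally finite, i.e. there is `k ∈ ℕ` bounding every degree
`deg v = #t⁻¹(v) + #s⁻¹(v)`. -/
theorem stmt15 {E V : Type*} [Countable E] [Countable V] (s t : E → V) :
    (∃ c : ℝ, ∀ x : lp (fun _ : E => ℂ) 2,
      (∃ y : lp (fun _ : V => ℂ) 2,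
        (∀ v : V, HasSum (fun e : (t ⁻¹' {v} : Set E) => x e) (y v)) ∧
        ‖y‖ ≤ c * ‖x‖) ∧
      (∃ y : lp (fun _ : V => ℂ) 2,
        (∀ v : V, HasSum (fun e : (s ⁻¹' {v} : Set E) => x e) (y v)) ∧
        ‖y‖ ≤ c * ‖x‖)) ↔
    (∃ k : ℕ, ∀ v : V, (t ⁻¹' {v}).Finite ∧ (s ⁻¹' {v}).Finite ∧
      (t ⁻¹' {v}).ncard + (s ⁻¹' {v}).ncard ≤ k) :=
  stmt15_general s t
end

section
/- Let a countable directed multigraph G be given by countable sets E (edges) and V (vertices) with maps s, t : E → V. Consider the transpose incidence operators (I⁺)^⊤ : d ↦ (d_{t(e)})_{e∈E} and (I⁻)^⊤ : d ↦ (d_{s(e)})_{e∈E}, each defined on its maximal domain as an operator from ℓ²(V) to ℓ²(E), e.g. D((I⁺)^⊤) = { d ∈ ℓ²(V) : (d_{t(e)})_{e∈E} ∈ ℓ²(E) }. Then both (I⁺)^⊤ and (I⁻)^⊤ are densely defined if and only if G is locally finite, i.e. deg(v) := #t⁻¹(v) + #s⁻¹(v) < ∞ for every v ∈ V. -/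
open scoped ENNReal

section Aux

variable {E V : Type*}

lemma aux_dense_imp (u : E → V)
    (h : Dense {d : lp (fun _ : V => ℂ) 2 | Memℓp (fun e : E => d (u e)) 2}) (v : V) :
    (u ⁻¹' {v}).Finite := by
  classical
  by_contra hinf
  have hcont : Continuous (fun d : lp (fun _ : V => ℂ) 2 => d v) := by
    apply LipschitzWith.continuous (K := 1)
    refine LipschitzWith.of_dist_le_mul fun d d' => ?_
    rw [NNReal.coe_one, one_mul, dist_eq_norm, dist_eq_norm]
    have : d v - d' v = (d - d') v := rfl
    rw [this]
    exact lp.norm_apply_le_norm (by norm_num) (d - d') v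
  have hclosed : IsClosed {d : lp (fun _ : V => ℂ) 2 | d v = 0} :=
    isClosed_eq hcont continuous_const
  have hsub : {d : lp (fun _ : V => ℂ) 2 | Memℓp (fun e : E => d (u e)) 2} ⊆
      {d : lp (fun _ : V => ℂ) 2 | d v = 0} := by
    intro d hd
    by_contra hdv
    have hsum : Summable fun e : E => ‖d (u e)‖ ^ (2 : ℝ≥0∞).toReal :=
      Memℓp.summable (by norm_num) hd
    have htend := hsum.tendsto_cofinite_zero
    have hpos : 0 < ‖d v‖ ^ (2 : ℝ≥0∞).toReal :=
      Real.rpow_pos_of_pos (norm_pos_iff.mpr hdv) _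
    have hev : ∀ᶠ e in Filter.cofinite,
        ‖d (u e)‖ ^ (2 : ℝ≥0∞).toReal < ‖d v‖ ^ (2 : ℝ≥0∞).toReal :=
      htend.eventually (gt_mem_nhds hpos)
    have hfin := Filter.eventually_cofinite.mp hev
    refine hinf (hfin.subset ?_)
    intro e he
    have hue : u e = v := he
    simp only [Set.mem_setOf_eq, hue]
    exact lt_irrefl _
  have hc : closure {d : lp (fun _ : V => ℂ) 2 | Memℓp (fun e : E => d (u e)) 2} ⊆
      {d : lp (fun _ : V => ℂ) 2 | d v = 0} := closure_minimal hsub hclosed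
  have h2 : {d : lp (fun _ : V => ℂ) 2 | d v = 0} = Set.univ :=
    Set.eq_univ_of_univ_subset (h.closure_eq ▸ hc)
  have hmem : (lp.single 2 v (1 : ℂ)) ∈ {d : lp (fun _ : V => ℂ) 2 | d v = 0} := by
    rw [h2]; trivial
  simp only [Set.mem_setOf_eq, lp.single_apply_self] at hmem
  exact one_ne_zero hmem

lemma aux_fin_imp (u : E → V) (hfin : ∀ v : V, (u ⁻¹' {v}).Finite) :
    Dense {d : lp (fun _ : V => ℂ) 2 | Memℓp (fun e : E => d (u e)) 2} := by
  classical
  intro d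
  have hs : HasSum (fun v : V => lp.single 2 v (d v)) d :=
    lp.hasSum_single (by norm_num) d
  refine mem_closure_of_tendsto hs (Filter.Eventually.of_forall fun n => ?_)
  have hpre : (u ⁻¹' (↑n : Set V)).Finite :=
    Set.biUnion_preimage_singleton u (↑n : Set V) ▸
      (n.finite_toSet.biUnion fun w _ => hfin w)
  refine memℓp_gen (summable_of_ne_finset_zero (s := hpre.toFinset) fun e he => ?_)
  have hz : (∑ w ∈ n, lp.single 2 w (d w) : lp (fun _ : V => ℂ) 2) (u e) = 0 := by
    rw [lp.coeFn_sum, Finset.sum_apply]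
    refine Finset.sum_eq_zero fun w hw => ?_
    refine lp.single_apply_ne 2 w _ fun hq => ?_
    exact he (hpre.mem_toFinset.mpr (by simp [Set.mem_preimage, hq ▸ hw]))
  simp only [hz, norm_zero]
  exact Real.zero_rpow (by norm_num)

end Aux

/-- For a countable directed multigraph `(E, V, s, t)`, the transpose
incidence operators `(I⁺)ᵀ : d ↦ (d (t e))_e` and `(I⁻)ᵀ : d ↦ (d (s e))_e`, with maximal
domains `{ d ∈ ℓ²(V) : (d (t e))_e ∈ ℓ²(E) }` (resp. with `s`), are both densely defined
if and only if the graph is locally finite, i.e. every vertex has finite degree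
`deg v = #t⁻¹(v) + #s⁻¹(v) < ∞`. -/
theorem stmt17 {E V : Type*} [Countable E] [Countable V] (s t : E → V) :
    (Dense {d : lp (fun _ : V => ℂ) 2 | Memℓp (fun e : E => d (t e)) 2} ∧
     Dense {d : lp (fun _ : V => ℂ) 2 | Memℓp (fun e : E => d (s e)) 2}) ↔
    (∀ v : V, (t ⁻¹' {v}).Finite ∧ (s ⁻¹' {v}).Finite) := by
  constructor
  · rintro ⟨h1, h2⟩ v
    exact ⟨aux_dense_imp t h1 v, aux_dense_imp s h2 v⟩
  · intro h
    exact ⟨aux_fin_imp t fun v => (h v).1, aux_fin_imp s fun v => (h v).2⟩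
end
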